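/- Let G be a graph and e an edge of G. If Dominator has a winning strategy in both the D-game and the S-game of the Maker-Breaker domination game on G − e, then Dominator also has winning strategies in both games on G; moreover γ_MB(G) ≤ γ_MB(G−e) and γ_MB'(G) ≤ γ_MB'(G−e). -/

import Mathlib

open SimpleGraph

namespace MBD

variable {V : Type*}

/-- Dominator's claimed set `D` is a dominating set of `G`. -/
def Dominates (G : SimpleGraph V) (D : Finset V) : Prop :=
  ∀ v : V, ∃ d ∈ D, d = v ∨ G.Adj d v

/-- Staller's claimed set `S` contains the whole closed neighborhood of some vertex. -/
def StallerWinSet (G : SimpleGraph V) (S : Finset V) : Prop :=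
  ∃ v : V, ∀ u : V, (u = v ∨ G.Adj u v) → u ∈ S

variable [DecidableEq V]

mutual
  /-- `DomD G k D S`: with Dominator having claimed `D`, Staller `S`, and Dominator to
  move, Dominator has a strategy winning the Maker-Breaker domination game on `G`
  using at most `k` further moves of his own. -/
  inductive DomD (G : SimpleGraph V) : ℕ → Finset V → Finset V → Prop
    | win {k : ℕ} {D S : Finset V} : Dominates G D → DomD G k D S
    | move {k : ℕ} {D S : Finset V} (v : V) : v ∉ D → v ∉ S →
        DomS G k (insert v D) S → DomD G (k + 1) D S
  /-- Like `DomD`, but it is Staller's turn to move. -/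
  inductive DomS (G : SimpleGraph V) : ℕ → Finset V → Finset V → Prop
    | win {k : ℕ} {D S : Finset V} : Dominates G D → DomS G k D S
    | move {k : ℕ} {D S : Finset V} : (∃ v : V, v ∉ D ∧ v ∉ S) →
        (∀ v : V, v ∉ D → v ∉ S → DomD G k D (insert v S)) → DomS G k D S
end

mutual
  /-- `StallD G k D S`: with Dominator having claimed `D`, Staller `S`, and Dominator to
  move, Staller has a strategy winning (claiming a whole closed neighborhood) within at
  most `k` further moves of her own. -/
  inductive StallD (G : SimpleGraph V) : ℕ → Finset V → Finset V → Prop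
    | win {k : ℕ} {D S : Finset V} : StallerWinSet G S → StallD G k D S
    | move {k : ℕ} {D S : Finset V} : (∃ v : V, v ∉ D ∧ v ∉ S) →
        (∀ v : V, v ∉ D → v ∉ S → StallS G k (insert v D) S) → StallD G k D S
  /-- Like `StallD`, but it is Staller's turn to move. -/
  inductive StallS (G : SimpleGraph V) : ℕ → Finset V → Finset V → Prop
    | win {k : ℕ} {D S : Finset V} : StallerWinSet G S → StallS G k D S
    | move {k : ℕ} {D S : Finset V} (v : V) : v ∉ D → v ∉ S →
        StallD G k D (insert v S) → StallS G (k + 1) D S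
end

/-- Dominator has a winning strategy in the D-game (Dominator starts). -/
def DominatorWinsD (G : SimpleGraph V) : Prop := ∃ k, DomD G k ∅ ∅

/-- Dominator has a winning strategy in the S-game (Staller starts). -/
def DominatorWinsS (G : SimpleGraph V) : Prop := ∃ k, DomS G k ∅ ∅

/-- Staller has a winning strategy in the D-game (Dominator starts). -/
def StallerWinsD (G : SimpleGraph V) : Prop := ∃ k, StallD G k ∅ ∅

/-- Staller has a winning strategy in the S-game (Staller starts). -/
def StallerWinsS (G : SimpleGraph V) : Prop := ∃ k, StallS G k ∅ ∅

/-- Outcome `𝒟`: Dominator wins both the D-game and the S-game. -/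
def outcomeD (G : SimpleGraph V) : Prop := DominatorWinsD G ∧ DominatorWinsS G

/-- Outcome `𝒮`: Staller wins both the D-game and the S-game. -/
def outcomeS (G : SimpleGraph V) : Prop := StallerWinsD G ∧ StallerWinsS G

/-- Outcome `𝒩`: the first player wins in both games. -/
def outcomeN (G : SimpleGraph V) : Prop := DominatorWinsD G ∧ StallerWinsS G

/-- `γ_MB(G)`: the minimum number of Dominator's moves needed to win the D-game,
`∞` if he has no winning strategy. -/
noncomputable def gMB (G : SimpleGraph V) : ℕ∞ :=
  sInf ((fun k : ℕ => (k : ℕ∞)) '' {k | DomD G k ∅ ∅})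

/-- `γ_MB'(G)`: the minimum number of Dominator's moves needed to win the S-game. -/
noncomputable def gMB' (G : SimpleGraph V) : ℕ∞ :=
  sInf ((fun k : ℕ => (k : ℕ∞)) '' {k | DomS G k ∅ ∅})

/-- `γ_SMB(G)`: the minimum number of Staller's moves needed to win the D-game. -/
noncomputable def gSMB (G : SimpleGraph V) : ℕ∞ :=
  sInf ((fun k : ℕ => (k : ℕ∞)) '' {k | StallD G k ∅ ∅})

/-- `γ_SMB'(G)`: the minimum number of Staller's moves needed to win the S-game. -/
noncomputable def gSMB' (G : SimpleGraph V) : ℕ∞ :=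
  sInf ((fun k : ℕ => (k : ℕ∞)) '' {k | StallS G k ∅ ∅})

end MBD

lemma MBD.dominates_mono {V : Type*} {G G' : SimpleGraph V} (h : G ≤ G') {D : Finset V}
    (hd : MBD.Dominates G D) : MBD.Dominates G' D := fun v =>
  (hd v).imp fun d ⟨hm, hc⟩ => ⟨hm, hc.imp id (fun ha => h ha)⟩

lemma MBD.mono_aux {V : Type*} [Fintype V] [DecidableEq V] {G G' : SimpleGraph V}
    (h : G ≤ G') :
    ∀ n : ℕ, (∀ k (D S : Finset V), ((D ∪ S)ᶜ).card ≤ n →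
        MBD.DomD G k D S → MBD.DomD G' k D S) ∧
      (∀ k (D S : Finset V), ((D ∪ S)ᶜ).card ≤ n →
        MBD.DomS G k D S → MBD.DomS G' k D S) := by
  intro n
  induction n with
  | zero =>
    constructor
    · intro k D S hc hd
      cases hd with
      | win hw => exact MBD.DomD.win (MBD.dominates_mono h hw)
      | move v hvD hvS hs =>
        exfalso
        have hv : v ∈ (D ∪ S)ᶜ := by simp [hvD, hvS]
        have := Finset.card_pos.mpr ⟨v, hv⟩
        omega
    · intro k D S hc hs
      cases hs with
      | win hw => exact MBD.DomS.win (MBD.dominates_mono h hw)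
      | move hex f =>
        exfalso
        obtain ⟨v, hvD, hvS⟩ := hex
        have hv : v ∈ (D ∪ S)ᶜ := by simp [hvD, hvS]
        have := Finset.card_pos.mpr ⟨v, hv⟩
        omega
  | succ n ih =>
    constructor
    · intro k D S hc hd
      cases hd with
      | win hw => exact MBD.DomD.win (MBD.dominates_mono h hw)
      | move v hvD hvS hs =>
        refine MBD.DomD.move v hvD hvS (ih.2 _ _ _ ?_ hs)
        have hv : v ∈ (D ∪ S)ᶜ := by simp [hvD, hvS]
        have h1 : insert v D ∪ S = insert v (D ∪ S) := by
          ext; simp [or_assoc]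
        have h2 : ((insert v (D ∪ S))ᶜ : Finset V) = (D ∪ S)ᶜ.erase v := by
          simp [Finset.compl_insert]
        rw [h1, h2, Finset.card_erase_of_mem hv]
        omega
    · intro k D S hc hs
      cases hs with
      | win hw => exact MBD.DomS.win (MBD.dominates_mono h hw)
      | move hex f =>
        refine MBD.DomS.move hex (fun v hvD hvS => ih.1 _ _ _ ?_ (f v hvD hvS))
        have hv : v ∈ (D ∪ S)ᶜ := by simp [hvD, hvS]
        have h1 : D ∪ insert v S = insert v (D ∪ S) := by
          ext; simp [or_left_comm]
        have h2 : ((insert v (D ∪ S))ᶜ : Finset V) = (D ∪ S)ᶜ.erase v := by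
          simp [Finset.compl_insert]
        rw [h1, h2, Finset.card_erase_of_mem hv]
        omega

lemma MBD.domD_mono {V : Type*} [Fintype V] [DecidableEq V] {G G' : SimpleGraph V}
    (h : G ≤ G') {k : ℕ} {D S : Finset V} (hd : MBD.DomD G k D S) :
    MBD.DomD G' k D S :=
  (MBD.mono_aux h _).1 k D S le_rfl hd

lemma MBD.domS_mono {V : Type*} [Fintype V] [DecidableEq V] {G G' : SimpleGraph V}
    (h : G ≤ G') {k : ℕ} {D S : Finset V} (hd : MBD.DomS G k D S) :
    MBD.DomS G' k D S :=
  (MBD.mono_aux h _).2 k D S le_rfl hd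

/-- Edge deletion, Dominator's side: if Dominator wins both games on `G − e`, then he
wins both games on `G`, and moreover `γ_MB(G) ≤ γ_MB(G−e)` and `γ_MB'(G) ≤ γ_MB'(G−e)`. -/
theorem stmt_4 {V : Type*} [Fintype V] [DecidableEq V] (G : SimpleGraph V)
    (e : Sym2 V) (he : e ∈ G.edgeSet)
    (hD : MBD.DominatorWinsD (G.deleteEdges {e}))
    (hS : MBD.DominatorWinsS (G.deleteEdges {e})) :
    (MBD.DominatorWinsD G ∧ MBD.DominatorWinsS G) ∧
    MBD.gMB G ≤ MBD.gMB (G.deleteEdges {e}) ∧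
    MBD.gMB' G ≤ MBD.gMB' (G.deleteEdges {e}) := by
  have hle : G.deleteEdges {e} ≤ G := SimpleGraph.deleteEdges_le _
  refine ⟨⟨hD.imp fun k hk => MBD.domD_mono hle hk,
          hS.imp fun k hk => MBD.domS_mono hle hk⟩, ?_, ?_⟩
  · exact sInf_le_sInf (Set.image_mono fun k hk => MBD.domD_mono hle hk)
  · exact sInf_le_sInf (Set.image_mono fun k hk => MBD.domS_mono hle hk)
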